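/- Let 𝓗 = (𝓗⁺ + 𝓗⁻)/2 be the centered discrete Hilbert transform on ℓ²(ℤ). Then 𝓗 ∘ 𝓗 = −( (1/4) S_{−1} + (1/2) Id + (1/4) S_{+1} ), where S_{±1} are the shift operators (S_{±1}f)(x) = f(x ∓ 1). -/

import Mathlib

open scoped Real

noncomputable section

/-- Kernel of the right discrete Hilbert transform: `K⁺(z) = -(1/π)·1/(z+1/2)`. -/
def Kplus (z : ℤ) : ℝ := -(1 / π) * (1 / ((z : ℝ) + 1 / 2))

/-- Kernel of the left discrete Hilbert transform: `K⁻(z) = -(1/π)·1/(z-1/2)`. -/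
def Kminus (z : ℤ) : ℝ := -(1 / π) * (1 / ((z : ℝ) - 1 / 2))

/-- The right discrete Hilbert transform `𝓗⁺` (the Fourier multiplier operator with
symbol `m⁺(ξ) = i e^{iπξ} sin(πξ)/|sin(πξ)|`), realized as convolution with `K⁺`. -/
def Hplus (f : ℤ → ℝ) : ℤ → ℝ := fun x => ∑' z : ℤ, Kplus z * f (x - z)

/-- The left discrete Hilbert transform `𝓗⁻` (the Fourier multiplier operator with
symbol `m⁻(ξ) = i e^{-iπξ} sin(πξ)/|sin(πξ)|`), realized as convolution with `K⁻`. -/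
def Hminus (f : ℤ → ℝ) : ℤ → ℝ := fun x => ∑' z : ℤ, Kminus z * f (x - z)

/-- The centered discrete Hilbert transform `𝓗 = (𝓗⁺ + 𝓗⁻)/2`. -/
def Hcent (f : ℤ → ℝ) : ℤ → ℝ := fun x => (Hplus f x + Hminus f x) / 2

namespace HTaux

open Filter


/-- `phi z = 1/(z+1/2)`. -/
def phi (z : ℤ) : ℝ := 1 / ((z : ℝ) + 1 / 2)

lemma den_ne (z : ℤ) : ((z : ℝ) + 1 / 2) ≠ 0 := by
  intro h
  have h2 : ((2 * z + 1 : ℤ) : ℝ) = 0 := by push_cast; linarith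
  have h3 : (2 * z + 1 : ℤ) = 0 := by exact_mod_cast h2
  omega

lemma basel_odd : HasSum (fun k : ℕ => (1 : ℝ) / ((2 * k + 1 : ℕ) : ℝ) ^ 2) (π ^ 2 / 8) := by
  have basel : HasSum (fun n : ℕ => (1 : ℝ) / (n : ℝ) ^ 2) (π ^ 2 / 6) := hasSum_zeta_two
  have heven : HasSum (fun k : ℕ => (1 : ℝ) / ((2 * k : ℕ) : ℝ) ^ 2) (π ^ 2 / 24) := by
    have h := basel.mul_left (1 / 4)
    have heq : (fun k : ℕ => (1 : ℝ) / ((2 * k : ℕ) : ℝ) ^ 2)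
        = fun k : ℕ => 1 / 4 * ((1 : ℝ) / (k : ℝ) ^ 2) := by
      funext k
      push_cast
      rcases eq_or_ne (k : ℝ) 0 with h0 | h0
      · simp [h0]
      · field_simp
        ring
    rw [heq, show (π ^ 2 / 24 : ℝ) = 1 / 4 * (π ^ 2 / 6) from by ring]
    exact h
  have hsumm : Summable (fun k : ℕ => (1 : ℝ) / ((2 * k + 1 : ℕ) : ℝ) ^ 2) := by
    have h := basel.summable.comp_injective (i := fun k : ℕ => 2 * k + 1)
      (fun a b hab => by dsimp at hab; omega)
    exact h
  obtain ⟨b, hb⟩ := hsumm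
  have htot := HasSum.even_add_odd (f := fun n : ℕ => (1 : ℝ) / (n : ℝ) ^ 2) heven hb
  have : π ^ 2 / 24 + b = π ^ 2 / 6 := htot.unique basel
  have hb8 : b = π ^ 2 / 8 := by linarith
  rwa [hb8] at hb

lemma hasSum_phi_sq : HasSum (fun z : ℤ => phi z ^ 2) (π ^ 2) := by
  have hnat : HasSum (fun n : ℕ => phi (n : ℤ) ^ 2) (π ^ 2 / 2) := by
    have h := basel_odd.mul_left 4
    have heq : (fun n : ℕ => phi (n : ℤ) ^ 2)
        = fun n : ℕ => 4 * ((1 : ℝ) / ((2 * n + 1 : ℕ) : ℝ) ^ 2) := by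
      funext n
      have hne : (((n : ℤ) : ℝ) + 1 / 2) ≠ 0 := den_ne (n : ℤ)
      simp only [phi]
      push_cast at hne ⊢
      field_simp
      ring
    rw [heq, show (π ^ 2 / 2 : ℝ) = 4 * (π ^ 2 / 8) from by ring]
    exact h
  have hneg : HasSum (fun n : ℕ => phi (-((n : ℤ) + 1)) ^ 2) (π ^ 2 / 2) := by
    have heq : (fun n : ℕ => phi (-((n : ℤ) + 1)) ^ 2) = fun n : ℕ => phi (n : ℤ) ^ 2 := by
      funext n
      have h1 : ((-((n : ℤ) + 1) : ℤ) : ℝ) + 1 / 2 = -((((n : ℤ)) : ℝ) + 1 / 2) := by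
        push_cast; ring
      have h2 : phi (-((n : ℤ) + 1)) = -phi (n : ℤ) := by
        unfold phi
        rw [h1, div_neg]
      rw [h2]
      ring
    rw [heq]
    exact hnat
  have h := HasSum.of_nat_of_neg_add_one (f := fun z : ℤ => phi z ^ 2) hnat hneg
  convert h using 1
  ring








lemma phi_neg' (z : ℤ) : phi (-1 - z) = -phi z := by
  have h1 : ((-1 - z : ℤ) : ℝ) + 1 / 2 = -(((z : ℤ) : ℝ) + 1 / 2) := by push_cast; ring
  unfold phi
  rw [h1, div_neg]

lemma phi_tendsto : Tendsto (fun n : ℕ => phi (n : ℤ)) atTop (nhds 0) := by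
  have h : Tendsto (fun n : ℕ => ((n : ℝ) + 1 / 2)) atTop atTop :=
    tendsto_atTop_add_const_right _ _ tendsto_natCast_atTop_atTop
  have h2 := h.inv_tendsto_atTop
  refine h2.congr fun n => ?_
  simp [phi, one_div]

lemma aux2 (a b : ℝ) (ha : a ≠ 0) (hb : b ≠ 0) (h : a - b = 1) :
    1 / a - 1 / b = -(1 / a * (1 / b)) := by
  field_simp
  linarith

lemma phi_sub (z : ℤ) : phi z - phi (z - 1) = -(phi z * phi (z - 1)) := by
  have h1 := den_ne z
  have h2 := den_ne (z - 1)
  unfold phi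
  exact aux2 _ _ h1 h2 (by push_cast; ring)

lemma summable_phi_sq_shift (c : ℤ) : Summable fun z : ℤ => phi (z - c) ^ 2 := by
  have h := ((Equiv.subRight c).summable_iff
    (f := fun z : ℤ => phi z ^ 2)).mpr hasSum_phi_sq.summable
  have heq : ((fun z : ℤ => phi z ^ 2) ∘ (Equiv.subRight c))
      = fun z : ℤ => phi (z - c) ^ 2 := by
    funext z
    simp [Function.comp, Equiv.subRight]
  rwa [heq] at h

lemma hasSum_psi : HasSum (fun z : ℤ => phi z - phi (z - 1)) 0 := by
  have habs : Summable fun z : ℤ => |phi z - phi (z - 1)| := by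
    refine Summable.of_nonneg_of_le (fun z => abs_nonneg _) (fun z => ?_)
      ((hasSum_phi_sq.summable.add (summable_phi_sq_shift 1)).div_const 2)
    rw [phi_sub, abs_neg, abs_mul]
    nlinarith [sq_nonneg (|phi z| - |phi (z - 1)|), sq_abs (phi z), sq_abs (phi (z - 1)),
      abs_nonneg (phi z), abs_nonneg (phi (z - 1))]
  have hsum : Summable (fun z : ℤ => phi z - phi (z - 1)) := summable_abs_iff.mp habs
  obtain ⟨S, hS⟩ := hsum
  have key : ∀ N : ℕ, ∑ z ∈ Finset.Icc (-(N : ℤ)) (N : ℤ), (phi z - phi (z - 1))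
      = phi (N : ℤ) - phi (-(N : ℤ) - 1) := by
    intro N
    induction N with
    | zero => simp
    | succ n ih =>
      have hset : Finset.Icc (-((n + 1 : ℕ) : ℤ)) ((n + 1 : ℕ) : ℤ)
          = insert (-((n + 1 : ℕ) : ℤ)) (insert ((n + 1 : ℕ) : ℤ)
              (Finset.Icc (-(n : ℕ) : ℤ) ((n : ℕ) : ℤ))) := by
        ext z
        simp only [Finset.mem_Icc, Finset.mem_insert]
        push_cast
        omega
      have hm1 : ((n + 1 : ℕ) : ℤ) ∉ Finset.Icc (-(n : ℕ) : ℤ) ((n : ℕ) : ℤ) := by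
        simp only [Finset.mem_Icc]
        push_cast
        omega
      have hm2 : (-((n + 1 : ℕ) : ℤ)) ∉ insert ((n + 1 : ℕ) : ℤ)
          (Finset.Icc (-(n : ℕ) : ℤ) ((n : ℕ) : ℤ)) := by
        simp only [Finset.mem_Icc, Finset.mem_insert]
        push_cast
        omega
      rw [hset, Finset.sum_insert hm2, Finset.sum_insert hm1, ih]
      have e1 : (-((n + 1 : ℕ) : ℤ)) - 1 = -((n : ℕ) : ℤ) - 2 := by push_cast; ring
      have e2 : (-((n + 1 : ℕ) : ℤ)) = -((n : ℕ) : ℤ) - 1 := by push_cast; ring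
      have e3 : ((n + 1 : ℕ) : ℤ) = ((n : ℕ) : ℤ) + 1 := by push_cast; ring
      have e4 : ((n : ℕ) : ℤ) + 1 - 1 = ((n : ℕ) : ℤ) := by ring
      rw [e1, e2, e3, e4]
      ring
  have tend1 : Tendsto (fun N : ℕ => ∑ z ∈ Finset.Icc (-(N : ℤ)) (N : ℤ),
      (phi z - phi (z - 1))) atTop (nhds S) := by
    have hmono : Monotone fun N : ℕ => Finset.Icc (-(N : ℤ)) (N : ℤ) := by
      intro a b hab
      apply Finset.Icc_subset_Icc <;> omega
    have hexh : ∀ z : ℤ, ∃ N : ℕ, z ∈ Finset.Icc (-(N : ℤ)) (N : ℤ) := fun z =>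
      ⟨z.natAbs, by simp only [Finset.mem_Icc]; omega⟩
    exact hS.comp (tendsto_atTop_finset_of_monotone hmono hexh)
  have tend1' : Tendsto (fun N : ℕ => phi (N : ℤ) - phi (-(N : ℤ) - 1)) atTop (nhds S) :=
    tend1.congr fun N => key N
  have tend2 : Tendsto (fun N : ℕ => phi (N : ℤ) - phi (-(N : ℤ) - 1)) atTop (nhds 0) := by
    have h2 : Tendsto (fun N : ℕ => phi (-(N : ℤ) - 1)) atTop (nhds 0) := by
      have heq : (fun N : ℕ => phi (-(N : ℤ) - 1)) = fun N : ℕ => -phi (N : ℤ) := by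
        funext N
        rw [← phi_neg' (N : ℤ)]
        congr 1
        ring
      rw [heq]
      simpa using phi_tendsto.neg
    simpa using phi_tendsto.sub h2
  have hS0 : S = 0 := tendsto_nhds_unique tend1' tend2
  rwa [hS0] at hS

lemma hasSum_tele (m : ℤ) : HasSum (fun z : ℤ => phi z - phi (z - m)) 0 := by
  have hnat : ∀ k : ℕ, HasSum (fun z : ℤ => phi z - phi (z - (k : ℤ))) 0 := by
    intro k
    induction k with
    | zero =>
      have heq : (fun z : ℤ => phi z - phi (z - ((0 : ℕ) : ℤ))) = fun _ => (0 : ℝ) := by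
        funext z; simp
      rw [heq]
      exact hasSum_zero
    | succ k ih =>
      have hshift : HasSum (fun z : ℤ => phi (z - k) - phi (z - k - 1)) 0 := by
        have h := ((Equiv.subRight (k : ℤ)).hasSum_iff
          (f := fun z : ℤ => phi z - phi (z - 1)) (a := 0)).mpr hasSum_psi
        have heq : ((fun z : ℤ => phi z - phi (z - 1)) ∘ (Equiv.subRight (k : ℤ)))
            = fun z : ℤ => phi (z - k) - phi (z - k - 1) := by
          funext z
          simp [Function.comp, Equiv.subRight]
        rwa [heq] at h
      have h := ih.add hshift
      have heq : (fun z : ℤ => (phi z - phi (z - (k : ℤ))) + (phi (z - k) - phi (z - k - 1)))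
          = fun z : ℤ => phi z - phi (z - ((k : ℕ) + 1 : ℕ)) := by
        funext z
        rw [show z - (((k : ℕ) + 1 : ℕ) : ℤ) = z - (k : ℤ) - 1 from by push_cast; ring]
        ring
      rw [heq] at h
      simpa using h
  obtain ⟨k, hk | hk⟩ := Int.eq_nat_or_neg m
  · rw [hk]; exact hnat k
  · rw [hk]
    have h1 := hnat k
    have h2 : HasSum (fun z : ℤ => phi (z + k) - phi z) 0 := by
      have h := ((Equiv.addRight (k : ℤ)).hasSum_iff).mpr h1
      have heq : ((fun z : ℤ => phi z - phi (z - (k : ℤ))) ∘ (Equiv.addRight (k : ℤ)))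
          = fun z : ℤ => phi (z + k) - phi z := by
        funext z
        simp only [Function.comp, Equiv.coe_addRight]
        rw [add_sub_cancel_right]
      rwa [heq] at h
    have h3 := h2.neg
    have heq : (fun z : ℤ => -(phi (z + k) - phi z))
        = fun z : ℤ => phi z - phi (z - (-(k : ℤ))) := by
      funext z
      rw [show z - (-(k : ℤ)) = z + k from by ring]
      ring
    rw [heq] at h3
    simpa using h3

lemma aux3 (a c k : ℝ) (ha : a ≠ 0) (hc : c ≠ 0) (hk : k ≠ 0) (h : a + c = k) :
    1 / a * (1 / c) = 1 / k * (1 / a - 1 / (-c)) := by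
  have hc' : (-c) ≠ 0 := neg_ne_zero.mpr hc
  field_simp
  linear_combination -h

lemma phi_mul_tele (m z : ℤ) (hm : m ≠ -1) :
    phi z * phi (m - z) = (1 / ((m : ℝ) + 1)) * (phi z - phi (z - (m + 1))) := by
  have h1 := den_ne z
  have h2 := den_ne (m - z)
  have h4 : ((m : ℝ) + 1) ≠ 0 := by
    intro h
    apply hm
    have : ((m : ℤ) : ℝ) = -1 := by linarith
    exact_mod_cast this
  have hd : ((z - (m + 1) : ℤ) : ℝ) + 1 / 2 = -(((m - z : ℤ) : ℝ) + 1 / 2) := by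
    push_cast; ring
  unfold phi
  rw [hd]
  exact aux3 _ _ _ h1 h2 h4 (by push_cast; ring)

lemma hasSum_phi_conv (m : ℤ) :
    HasSum (fun z : ℤ => phi z * phi (m - z)) (if m = -1 then -(π ^ 2) else 0) := by
  rcases eq_or_ne m (-1) with rfl | hm
  · simp only [if_pos rfl]
    have heq : (fun z : ℤ => phi z * phi (-1 - z)) = fun z => -(phi z ^ 2) := by
      funext z
      rw [phi_neg' z]
      ring
    rw [heq]
    exact hasSum_phi_sq.neg
  · simp only [if_neg hm]
    have h := (hasSum_tele (m + 1)).mul_left (1 / ((m : ℝ) + 1))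
    have heq : (fun z : ℤ => 1 / ((m : ℝ) + 1) * (phi z - phi (z - (m + 1))))
        = fun z : ℤ => phi z * phi (m - z) :=
      funext fun z => (phi_mul_tele m z hm).symm
    rw [heq] at h
    simpa using h








lemma summable_abs_phi_rpow : Summable fun z : ℤ => |phi z| ^ (4 / 3 : ℝ) := by
  have hbase : Summable fun z : ℤ => |(z : ℝ)| ^ (-(4 / 3 : ℝ)) :=
    Real.summable_abs_int_rpow (by norm_num)
  have hg : Summable fun z : ℤ =>
      (2 : ℝ) ^ (4 / 3 : ℝ) * |(z : ℝ)| ^ (-(4 / 3 : ℝ))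
        + (if z = 0 then (2 : ℝ) ^ (4 / 3 : ℝ) else 0) :=
    (hbase.mul_left _).add (hasSum_ite_eq (0 : ℤ) _).summable
  refine Summable.of_nonneg_of_le (fun z => Real.rpow_nonneg (abs_nonneg _) _) (fun z => ?_) hg
  rcases eq_or_ne z 0 with rfl | hz
  · have e1 : |phi 0| = 2 := by unfold phi; norm_num
    have e2 : |((0 : ℤ) : ℝ)| ^ (-(4 / 3 : ℝ)) = 0 := by
      rw [Int.cast_zero, abs_zero, Real.zero_rpow (by norm_num)]
    rw [e1, e2, if_pos rfl, mul_zero, zero_add]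
  · rw [if_neg hz, add_zero]
    have hz1 : (1 : ℝ) ≤ |(z : ℝ)| := by
      rw [← Int.cast_abs]
      exact_mod_cast Int.one_le_abs (by omega)
    have ht : |(z : ℝ)| ≤ |(z : ℝ) + 1 / 2| + 1 / 2 := by
      calc |(z : ℝ)| = |((z : ℝ) + 1 / 2) + (-(1 / 2))| := by norm_num
        _ ≤ |(z : ℝ) + 1 / 2| + |(-(1 / 2) : ℝ)| := abs_add_le _ _
        _ = |(z : ℝ) + 1 / 2| + 1 / 2 := by norm_num
    have hhalf : |(z : ℝ)| / 2 ≤ |(z : ℝ) + 1 / 2| := by linarith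
    have hpos : 0 < |(z : ℝ)| / 2 := by linarith
    have key := Real.rpow_le_rpow_of_nonpos hpos hhalf (by norm_num : -(4 / 3 : ℝ) ≤ 0)
    have eL : |phi z| ^ (4 / 3 : ℝ) = |(z : ℝ) + 1 / 2| ^ (-(4 / 3 : ℝ)) := by
      unfold phi
      rw [one_div, abs_inv, Real.inv_rpow (abs_nonneg _), ← Real.rpow_neg (abs_nonneg _)]
    have eR : (|(z : ℝ)| / 2) ^ (-(4 / 3 : ℝ))
        = (2 : ℝ) ^ (4 / 3 : ℝ) * |(z : ℝ)| ^ (-(4 / 3 : ℝ)) := by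
      rw [Real.div_rpow (abs_nonneg _) (by norm_num : (0:ℝ) ≤ 2),
        Real.rpow_neg (by norm_num : (0:ℝ) ≤ 2), div_eq_mul_inv, inv_inv, mul_comm]
    rw [eL, ← eR]
    exact key

lemma summable_abs_phi_rpow_shift (c : ℤ) :
    Summable fun z : ℤ => |phi (z - c)| ^ (4 / 3 : ℝ) := by
  have h := ((Equiv.subRight c).summable_iff
    (f := fun z : ℤ => |phi z| ^ (4 / 3 : ℝ))).mpr summable_abs_phi_rpow
  refine h.congr fun z => rfl

lemma triple_bound (A B C : ℝ) (hA : 0 ≤ A) (hB : 0 ≤ B) (hC : 0 ≤ C) :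
    A * (B * C) ≤ (1 / 2) * (A ^ (4 / 3 : ℝ) * B ^ (4 / 3 : ℝ))
      + (1 / 4) * (A ^ (4 / 3 : ℝ) * C ^ 2) + (1 / 4) * (B ^ (4 / 3 : ℝ) * C ^ 2) := by
  have hp0 : 0 ≤ A ^ ((1 : ℝ) / 3) := Real.rpow_nonneg hA _
  have hq0 : 0 ≤ B ^ ((1 : ℝ) / 3) := Real.rpow_nonneg hB _
  have hA3 : (A ^ ((1 : ℝ) / 3)) ^ (3 : ℕ) = A := by
    rw [← Real.rpow_natCast (A ^ ((1 : ℝ) / 3)) 3, ← Real.rpow_mul hA]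
    norm_num
  have hB3 : (B ^ ((1 : ℝ) / 3)) ^ (3 : ℕ) = B := by
    rw [← Real.rpow_natCast (B ^ ((1 : ℝ) / 3)) 3, ← Real.rpow_mul hB]
    norm_num
  have hA4 : A ^ (4 / 3 : ℝ) = (A ^ ((1 : ℝ) / 3)) ^ (4 : ℕ) := by
    rw [← Real.rpow_natCast (A ^ ((1 : ℝ) / 3)) 4, ← Real.rpow_mul hA]
    norm_num
  have hB4 : B ^ (4 / 3 : ℝ) = (B ^ ((1 : ℝ) / 3)) ^ (4 : ℕ) := by
    rw [← Real.rpow_natCast (B ^ ((1 : ℝ) / 3)) 4, ← Real.rpow_mul hB]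
    norm_num
  set p := A ^ ((1 : ℝ) / 3)
  set q := B ^ ((1 : ℝ) / 3)
  rw [hA4, hB4, ← hA3, ← hB3]
  nlinarith [sq_nonneg (p ^ 2 * q ^ 2 - p * q * C), sq_nonneg ((p ^ 2 - q ^ 2) * C),
    mul_nonneg hp0 hq0, mul_nonneg (mul_nonneg hp0 hq0) hC, sq_nonneg (p * q), sq_nonneg C,
    mul_nonneg (mul_nonneg (mul_nonneg hp0 hp0) hq0) hq0]

/-- Kernel parametrized by shift. -/
def Kk (a : ℤ) (z : ℤ) : ℝ := -(1 / π) * phi (z - a)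

def twist (x : ℤ) : ℤ × ℤ ≃ ℤ × ℤ where
  toFun p := (p.1, x - p.1 - p.2)
  invFun p := (p.1, x - p.1 - p.2)
  left_inv p := by
    obtain ⟨a, b⟩ := p
    dsimp only
    rw [Prod.mk.injEq]
    omega
  right_inv p := by
    obtain ⟨a, b⟩ := p
    dsimp only
    rw [Prod.mk.injEq]
    omega

def twist2 (x : ℤ) : ℤ × ℤ ≃ ℤ × ℤ where
  toFun p := (p.2, x - p.1 - p.2)
  invFun q := (x - q.1 - q.2, q.1)
  left_inv p := by
    obtain ⟨a, b⟩ := p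
    dsimp only
    rw [Prod.mk.injEq]
    omega
  right_inv p := by
    obtain ⟨a, b⟩ := p
    dsimp only
    rw [Prod.mk.injEq]
    omega

def shear : ℤ × ℤ ≃ ℤ × ℤ where
  toFun q := (q.2, q.1 - q.2)
  invFun p := (p.1 + p.2, p.1)
  left_inv p := by
    obtain ⟨a, b⟩ := p
    dsimp only
    rw [Prod.mk.injEq]
    omega
  right_inv p := by
    obtain ⟨a, b⟩ := p
    dsimp only
    rw [Prod.mk.injEq]
    omega

set_option maxHeartbeats 1000000 in
lemma summable_F (f : ℤ → ℝ) (hf2 : Summable fun i : ℤ => f i ^ 2) (a b x : ℤ) :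
    Summable fun p : ℤ × ℤ => Kk a p.1 * (Kk b p.2 * f (x - p.1 - p.2)) := by
  have hu : Summable fun z : ℤ => |phi (z - a)| ^ (4 / 3 : ℝ) := summable_abs_phi_rpow_shift a
  have hv : Summable fun z : ℤ => |phi (z - b)| ^ (4 / 3 : ℝ) := summable_abs_phi_rpow_shift b
  have hunn : ∀ z : ℤ, 0 ≤ |phi (z - a)| ^ (4 / 3 : ℝ) :=
    fun z => Real.rpow_nonneg (abs_nonneg _) _
  have hvnn : ∀ z : ℤ, 0 ≤ |phi (z - b)| ^ (4 / 3 : ℝ) :=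
    fun z => Real.rpow_nonneg (abs_nonneg _) _
  have S1 : Summable fun p : ℤ × ℤ =>
      |phi (p.1 - a)| ^ (4 / 3 : ℝ) * |phi (p.2 - b)| ^ (4 / 3 : ℝ) :=
    hu.mul_of_nonneg hv hunn hvnn
  have S2 : Summable fun p : ℤ × ℤ => |phi (p.1 - a)| ^ (4 / 3 : ℝ) * f (x - p.1 - p.2) ^ 2 := by
    have hprod : Summable fun p : ℤ × ℤ => |phi (p.1 - a)| ^ (4 / 3 : ℝ) * f p.2 ^ 2 :=
      hu.mul_of_nonneg hf2 hunn (fun i => sq_nonneg _)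
    have h := ((twist x).summable_iff
      (f := fun p : ℤ × ℤ => |phi (p.1 - a)| ^ (4 / 3 : ℝ) * f p.2 ^ 2)).mpr hprod
    exact h.congr fun p => rfl
  have S3 : Summable fun p : ℤ × ℤ => |phi (p.2 - b)| ^ (4 / 3 : ℝ) * f (x - p.1 - p.2) ^ 2 := by
    have hprod : Summable fun p : ℤ × ℤ => |phi (p.1 - b)| ^ (4 / 3 : ℝ) * f p.2 ^ 2 :=
      hv.mul_of_nonneg hf2 hvnn (fun i => sq_nonneg _)
    have h := ((twist2 x).summable_iff
      (f := fun p : ℤ × ℤ => |phi (p.1 - b)| ^ (4 / 3 : ℝ) * f p.2 ^ 2)).mpr hprod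
    exact h.congr fun p => rfl
  have hBig : Summable fun p : ℤ × ℤ =>
      (1 / π) ^ 2 * ((1 / 2) * (|phi (p.1 - a)| ^ (4 / 3 : ℝ) * |phi (p.2 - b)| ^ (4 / 3 : ℝ))
        + (1 / 4) * (|phi (p.1 - a)| ^ (4 / 3 : ℝ) * f (x - p.1 - p.2) ^ 2)
        + (1 / 4) * (|phi (p.2 - b)| ^ (4 / 3 : ℝ) * f (x - p.1 - p.2) ^ 2)) := by
    refine Summable.mul_left _ ?_
    exact ((S1.mul_left (1 / 2)).add (S2.mul_left (1 / 4))).add (S3.mul_left (1 / 4))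
  refine summable_abs_iff.mp ?_
  refine Summable.of_nonneg_of_le (fun p => abs_nonneg _) (fun p => ?_) hBig
  obtain ⟨z, y⟩ := p
  have hpi : |(-(1 / π) : ℝ)| = 1 / π := by
    rw [abs_neg, abs_of_pos (by positivity)]
  have hrw : |Kk a z * (Kk b y * f (x - z - y))|
      = (1 / π) ^ 2 * (|phi (z - a)| * (|phi (y - b)| * |f (x - z - y)|)) := by
    unfold Kk
    rw [abs_mul, abs_mul, abs_mul, abs_mul, hpi]
    ring
  rw [hrw]
  have htb := triple_bound |phi (z - a)| |phi (y - b)| |f (x - z - y)|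
    (abs_nonneg _) (abs_nonneg _) (abs_nonneg _)
  rw [sq_abs] at htb
  have hpos : (0 : ℝ) ≤ (1 / π) ^ 2 := sq_nonneg _
  calc (1 / π) ^ 2 * (|phi (z - a)| * (|phi (y - b)| * |f (x - z - y)|))
      ≤ (1 / π) ^ 2 * ((1 / 2) * (|phi (z - a)| ^ (4 / 3 : ℝ) * |phi (y - b)| ^ (4 / 3 : ℝ))
        + (1 / 4) * (|phi (z - a)| ^ (4 / 3 : ℝ) * f (x - z - y) ^ 2)
        + (1 / 4) * (|phi (y - b)| ^ (4 / 3 : ℝ) * f (x - z - y) ^ 2)) :=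
      mul_le_mul_of_nonneg_left htb hpos
    _ = _ := by ring

lemma master (f : ℤ → ℝ) (hf2 : Summable fun i : ℤ => f i ^ 2) (a b x : ℤ) :
    (Summable fun z : ℤ => Kk a z * ∑' y : ℤ, Kk b y * f (x - z - y)) ∧
      ∑' z : ℤ, Kk a z * ∑' y : ℤ, Kk b y * f (x - z - y) = -f (x - a - b + 1) := by
  have hF := summable_F f hf2 a b x
  constructor
  · have hout : Summable fun z : ℤ =>
        ∑' y : ℤ, Kk a z * (Kk b y * f (x - z - y)) :=
      (hF.hasSum.prod_fiberwise (fun z => (hF.prod_factor z).hasSum)).summable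
    exact hout.congr fun z => tsum_mul_left
  · have step1 : ∑' z : ℤ, Kk a z * ∑' y : ℤ, Kk b y * f (x - z - y)
        = ∑' z : ℤ, ∑' y : ℤ, Kk a z * (Kk b y * f (x - z - y)) :=
      tsum_congr fun z => tsum_mul_left.symm
    have step2 : ∑' z : ℤ, ∑' y : ℤ, Kk a z * (Kk b y * f (x - z - y))
        = ∑' p : ℤ × ℤ, Kk a p.1 * (Kk b p.2 * f (x - p.1 - p.2)) :=
      (Summable.tsum_prod' hF fun z => hF.prod_factor z).symm
    have hG : Summable fun q : ℤ × ℤ => Kk a q.2 * (Kk b (q.1 - q.2) * f (x - q.2 - (q.1 - q.2))) := by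
      have h := (shear.summable_iff
        (f := fun p : ℤ × ℤ => Kk a p.1 * (Kk b p.2 * f (x - p.1 - p.2)))).mpr hF
      exact h.congr fun q => rfl
    have step3 : ∑' p : ℤ × ℤ, Kk a p.1 * (Kk b p.2 * f (x - p.1 - p.2))
        = ∑' q : ℤ × ℤ, Kk a q.2 * (Kk b (q.1 - q.2) * f (x - q.2 - (q.1 - q.2))) :=
      (shear.tsum_eq (fun p : ℤ × ℤ => Kk a p.1 * (Kk b p.2 * f (x - p.1 - p.2)))).symm
    have step4 : ∑' q : ℤ × ℤ, Kk a q.2 * (Kk b (q.1 - q.2) * f (x - q.2 - (q.1 - q.2)))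
        = ∑' w : ℤ, ∑' z : ℤ, Kk a z * (Kk b (w - z) * f (x - z - (w - z))) :=
      Summable.tsum_prod' hG fun w => hG.prod_factor w
    have hker : ∀ w : ℤ, ∑' z : ℤ, Kk a z * (Kk b (w - z) * f (x - z - (w - z)))
        = (if w = a + b - 1 then (-1 : ℝ) else 0) * f (x - w) := by
      intro w
      have hFe : ∀ z : ℤ, Kk a z * (Kk b (w - z) * f (x - z - (w - z)))
          = (Kk a z * Kk b (w - z)) * f (x - w) := by
        intro z
        rw [show x - z - (w - z) = x - w from by ring]
        ring
      rw [tsum_congr hFe, tsum_mul_right]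
      congr 1
      have h0 := hasSum_phi_conv (w - a - b)
      have h2 := ((Equiv.subRight a).hasSum_iff
        (f := fun z : ℤ => phi z * phi ((w - a - b) - z))).mpr h0
      have heq : ((fun z : ℤ => phi z * phi ((w - a - b) - z)) ∘ (Equiv.subRight a))
          = fun z : ℤ => phi (z - a) * phi (w - z - b) := by
        funext z
        show phi (z - a) * phi ((w - a - b) - (z - a)) = _
        rw [show (w - a - b) - (z - a) = w - z - b from by ring]
      rw [heq] at h2
      have h3 := h2.mul_left ((1 / π) ^ 2)
      have heq2 : (fun z : ℤ => (1 / π) ^ 2 * (phi (z - a) * phi (w - z - b)))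
          = fun z : ℤ => Kk a z * Kk b (w - z) := by
        funext z
        show _ = -(1 / π) * phi (z - a) * (-(1 / π) * phi ((w - z) - b))
        ring
      rw [heq2] at h3
      have hval : (1 / π : ℝ) ^ 2 * (if w - a - b = -1 then -(π ^ 2) else 0)
          = (if w = a + b - 1 then (-1 : ℝ) else 0) := by
        have hcond : (w - a - b = -1) ↔ (w = a + b - 1) := by omega
        by_cases hc : w = a + b - 1
        · rw [if_pos (hcond.mpr hc), if_pos hc]
          field_simp
        · rw [if_neg (fun hh => hc (hcond.mp hh)), if_neg hc, mul_zero]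
      rw [hval] at h3
      exact h3.tsum_eq
    have step5 : ∑' w : ℤ, (if w = a + b - 1 then (-1 : ℝ) else 0) * f (x - w)
        = -f (x - a - b + 1) := by
      rw [tsum_eq_single (a + b - 1) (fun w hw => by rw [if_neg hw, zero_mul])]
      rw [if_pos rfl, show x - (a + b - 1) = x - a - b + 1 from by ring]
      ring
    rw [step1, step2, step3, step4, tsum_congr hker, step5]


end HTaux

open HTaux

/-- `𝓗 ∘ 𝓗 = -((1/4)S_{-1} + (1/2)Id + (1/4)S_{+1})` for the centered discrete
Hilbert transform, where `(S_{±1}f)(x) = f(x ∓ 1)`. -/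
theorem Hcent_sq (f : ℤ → ℝ) (hf : Memℓp f 2) :
    Hcent (Hcent f) =
      fun x => -((1 / 4) * f (x + 1) + (1 / 2) * f x + (1 / 4) * f (x - 1)) := by
  have hf2 : Summable fun i : ℤ => f i ^ 2 := by
    have h := hf.summable (by norm_num : 0 < (2 : ENNReal).toReal)
    have h2 : ((2 : ENNReal)).toReal = ((2 : ℕ) : ℝ) := by norm_num
    rw [h2] at h
    refine h.congr fun i => ?_
    rw [Real.rpow_natCast, Real.norm_eq_abs, sq_abs]
  have KplusKk : Kplus = Kk 0 := by
    funext z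
    unfold Kplus Kk phi
    rw [sub_zero]
  have KminusKk : Kminus = Kk 1 := by
    funext z
    unfold Kminus Kk phi
    rw [show ((z - 1 : ℤ) : ℝ) + 1 / 2 = (z : ℝ) - 1 / 2 from by push_cast; ring]
  have m00 := master f hf2 0 0
  have m01 := master f hf2 0 1
  have m10 := master f hf2 1 0
  have m11 := master f hf2 1 1
  funext x
  have hpt : ∀ (c : ℤ) (z : ℤ), Kk c z * Hcent f (x - z)
      = (Kk c z * ∑' y : ℤ, Kk 0 y * f (x - z - y)) / 2
        + (Kk c z * ∑' y : ℤ, Kk 1 y * f (x - z - y)) / 2 := by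
    intro c z
    unfold Hcent Hplus Hminus
    rw [KplusKk, KminusKk]
    ring
  have hplus_eq : Hplus (Hcent f) x = (-f (x + 1) + -f x) / 2 := by
    unfold Hplus
    rw [KplusKk, tsum_congr (hpt 0),
      Summable.tsum_add (((m00 x).1).div_const 2) (((m01 x).1).div_const 2),
      tsum_div_const, tsum_div_const, (m00 x).2, (m01 x).2,
      show x - 0 - 0 + 1 = x + 1 from by ring, show x - 0 - 1 + 1 = x from by ring]
    ring
  have hminus_eq : Hminus (Hcent f) x = (-f x + -f (x - 1)) / 2 := by
    unfold Hminus
    rw [KminusKk, tsum_congr (hpt 1),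
      Summable.tsum_add (((m10 x).1).div_const 2) (((m11 x).1).div_const 2),
      tsum_div_const, tsum_div_const, (m10 x).2, (m11 x).2,
      show x - 1 - 0 + 1 = x from by ring, show x - 1 - 1 + 1 = x - 1 from by ring]
    ring
  show (Hplus (Hcent f) x + Hminus (Hcent f) x) / 2 = _
  rw [hplus_eq, hminus_eq]
  ring
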